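/- Let A and B be abelian groups, f : A → B, and m ∈ ℕ₀. Then fdeg(f) ≤ m if and only if for every k > m and all x_1, …, x_k ∈ A, f(∑_{i=1}^k x_i) = ∑_{S ⊊ {1,…,k}} (−1)^{k−|S|+1} f(∑_{j∈S} x_j). -/

import Mathlib

open scoped BigOperators

/-- Action of the integral group ring `ℤ[A]` on functions `A → B`:
`(τ_a * f)(x) = f(x + a)`, extended linearly. -/
noncomputable def groupRingAct {A B : Type*} [AddCommGroup A] [AddCommGroup B]
    (r : AddMonoidAlgebra ℤ A) (f : A → B) : A → B :=
  fun x => r.coeff.sum fun a z => z • f (x + a)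

/-- The augmentation ideal of the group ring `R[A]`. -/
noncomputable def augIdealR (R : Type*) (A : Type*) [CommRing R] [AddCommGroup A] :
    Ideal (AddMonoidAlgebra R A) :=
  Ideal.span {r : AddMonoidAlgebra R A | ∃ a : A, r = AddMonoidAlgebra.single a 1 - 1}

/-- The augmentation ideal of `ℤ[A]`. -/
noncomputable def augIdeal (A : Type*) [AddCommGroup A] : Ideal (AddMonoidAlgebra ℤ A) :=
  augIdealR ℤ A

/-- The functional degree of `f : A → B`: the least `n` with `I^(n+1) * f = 0`,
where `I` is the augmentation ideal of `ℤ[A]`; `⊤` if there is no such `n`. -/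
noncomputable def fdeg {A B : Type*} [AddCommGroup A] [AddCommGroup B] (f : A → B) : ℕ∞ :=
  sInf {N : ℕ∞ | ∃ n : ℕ, N = (n : ℕ∞) ∧
    ∀ r ∈ augIdeal A ^ (n + 1), groupRingAct r f = 0}

/-! Write `τ_a` for `single a 1 ∈ ℤ[A]`. The `n`-th power of the augmentation ideal is spanned by
the products `(τ_{x₁} - 1) ⋯ (τ_{xₙ} - 1)`, so `fdeg f ≤ m` says that all these products with
`n = m + 1` kill `f`. Expanding such a product, its action on `f` evaluated at `0` is the
alternating sum `∑_S (-1)^(n - |S|) f (∑_{j ∈ S} x_j)`, whose vanishing is the sum formula. The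
formula for all `k > m` is enough to kill `f` everywhere and not just at `0`, because
evaluating at `a` instead of `0` adds just one factor `τ_a - 1` to the product. -/

open AddMonoidAlgebra Finset

noncomputable def translationRep (A B : Type*) [AddCommGroup A] [AddCommGroup B] :
    AddMonoidAlgebra ℤ A →ₐ[ℤ] Module.End ℤ (A → B) :=
  lift ℤ (Module.End ℤ (A → B)) A
    { toFun := fun a => LinearMap.funLeft ℤ B (· + a.toAdd)
      map_one' := by ext; simp
      map_mul' := fun a b => by ext; simp [add_assoc] }

section
variable {A B : Type*} [AddCommGroup A] [AddCommGroup B]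

theorem groupRingAct_eq_translationRep (r : AddMonoidAlgebra ℤ A) (f : A → B) :
    groupRingAct r f = translationRep A B r f := by
  ext x
  simp [groupRingAct, translationRep, lift_apply, Finsupp.sum]

theorem groupRingAct_mul (r s : AddMonoidAlgebra ℤ A) (f : A → B) :
    groupRingAct (r * s) f = groupRingAct r (groupRingAct s f) := by
  simp [groupRingAct_eq_translationRep]

theorem groupRingAct_single_sub_one_apply (a : A) (f : A → B) (x : A) :
    groupRingAct (single a 1 - 1) f x = f (x + a) - f x := by
  simp [groupRingAct_eq_translationRep, translationRep]

noncomputable def groupRingAnnihilator (f : A → B) : Ideal (AddMonoidAlgebra ℤ A) where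
  carrier := {r | groupRingAct r f = 0}
  add_mem' hr hs := by simp_all [groupRingAct_eq_translationRep]
  zero_mem' := by simp [groupRingAct_eq_translationRep]
  smul_mem' _ _ hr := by simp_all [groupRingAct_eq_translationRep]

theorem mem_groupRingAnnihilator {f : A → B} {r : AddMonoidAlgebra ℤ A} :
    r ∈ groupRingAnnihilator f ↔ groupRingAct r f = 0 := Iff.rfl

theorem fdeg_le_iff_augIdeal_pow_le_groupRingAnnihilator (f : A → B) (m : ℕ) :
    fdeg f ≤ m ↔ augIdeal A ^ (m + 1) ≤ groupRingAnnihilator f := by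
  refine ⟨fun hle => ?_, fun h => sInf_le ⟨m, rfl, h⟩⟩
  have hne : {N : ℕ∞ | ∃ n : ℕ, N = n ∧
      ∀ r ∈ augIdeal A ^ (n + 1), groupRingAct r f = 0}.Nonempty := by
    by_contra h
    simp [fdeg, Set.not_nonempty_iff_eq_empty.mp h] at hle
  obtain ⟨n, hn : fdeg f = n, hann⟩ := csInf_mem hne
  rw [hn, Nat.cast_le] at hle
  exact (Ideal.pow_le_pow_right (by omega)).trans hann

noncomputable def differenceProd {k : ℕ} (x : Fin k → A) : AddMonoidAlgebra ℤ A :=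
  ∏ i, (single (x i) 1 - 1)

theorem differenceProd_cons {k : ℕ} (a : A) (x : Fin k → A) :
    differenceProd (Fin.cons a x : Fin (k + 1) → A) = (single a 1 - 1) * differenceProd x := by
  simp [differenceProd, Fin.prod_univ_succ]

theorem augIdeal_eq_span : augIdeal A = Ideal.span (Set.range fun a : A => single a 1 - 1) := by
  simp only [augIdeal, augIdealR, Set.range, eq_comm]

theorem augIdeal_pow_eq_span (n : ℕ) :
    augIdeal A ^ n = Ideal.span (Set.range fun x : Fin n → A => differenceProd x) := by
  induction n with
  | zero => simp [Set.range_unique, differenceProd]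
  | succ n ih =>
    rw [pow_succ', ih, augIdeal_eq_span, Ideal.span_mul_span']
    congr 1
    ext r
    simp only [Set.mem_mul, Set.mem_range]
    constructor
    · rintro ⟨_, ⟨a, rfl⟩, _, ⟨x, rfl⟩, rfl⟩
      exact ⟨Fin.cons a x, differenceProd_cons a x⟩
    · rintro ⟨x, rfl⟩
      refine ⟨_, ⟨x 0, rfl⟩, _, ⟨Fin.tail x, rfl⟩, ?_⟩
      rw [← differenceProd_cons, Fin.cons_self_tail]

theorem differenceProd_mem_augIdeal_pow {k : ℕ} (x : Fin k → A) :
    differenceProd x ∈ augIdeal A ^ k := by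
  rw [augIdeal_pow_eq_span]
  exact Ideal.subset_span ⟨x, rfl⟩

theorem differenceProd_eq_sum {k : ℕ} (x : Fin k → A) :
    differenceProd x = ∑ S ∈ univ.powerset, single (∑ j ∈ S, x j) ((-1 : ℤ) ^ (k - #S)) := by
  classical
  simp only [differenceProd, sub_eq_add_neg, prod_add, prod_const,
    card_sdiff_of_subset (subset_univ _), card_univ, Fintype.card_fin]
  refine sum_congr rfl fun S _ => ?_
  rw [prod_single, prod_const_one, mul_comm, ← Int.cast_one, ← Int.cast_neg, ← Int.cast_pow,
    ← zsmul_eq_mul, smul_single, smul_eq_mul, mul_one]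

theorem groupRingAct_differenceProd_apply_zero {k : ℕ} (x : Fin k → A) (f : A → B) :
    groupRingAct (differenceProd x) f 0 =
      ∑ S ∈ univ.powerset, (-1 : ℤ) ^ (k - #S) • f (∑ j ∈ S, x j) := by
  simp only [groupRingAct_eq_translationRep, differenceProd_eq_sum, map_sum, LinearMap.sum_apply,
    Finset.sum_apply, translationRep, lift_single, LinearMap.smul_apply, Pi.smul_apply]
  simp

theorem sum_formula_iff_groupRingAct_differenceProd_apply_zero {k : ℕ} (x : Fin k → A)
    (f : A → B) :
    f (∑ i, x i) = ∑ S ∈ univ.powerset.filter (· ≠ univ), (-1 : ℤ) ^ (k - #S + 1) • f (∑ j ∈ S, x j)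
      ↔ groupRingAct (differenceProd x) f 0 = 0 := by
  classical
  rw [groupRingAct_differenceProd_apply_zero, ← add_sum_erase _ _ (mem_powerset_self univ),
    ← filter_ne', card_univ, Fintype.card_fin, Nat.sub_self, pow_zero, one_smul, add_comm,
    ← neg_eq_iff_add_eq_zero, ← sum_neg_distrib]
  simp only [pow_succ, mul_neg_one, neg_smul, eq_comm]

theorem groupRingAct_differenceProd_eq_zero {k : ℕ} (x : Fin k → A) (f : A → B)
    (h₀ : groupRingAct (differenceProd x) f 0 = 0)
    (h₁ : ∀ a, groupRingAct (differenceProd (Fin.cons a x : Fin (k + 1) → A)) f 0 = 0) :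
    groupRingAct (differenceProd x) f = 0 := by
  ext a
  simpa [differenceProd_cons, groupRingAct_mul, groupRingAct_single_sub_one_apply, h₀] using h₁ a

end

theorem fdeg_le_iff_sum_formula {A B : Type*} [AddCommGroup A] [AddCommGroup B]
    (f : A → B) (m : ℕ) :
    fdeg f ≤ (m : ℕ∞) ↔
      ∀ k : ℕ, k > m → ∀ x : Fin k → A,
        f (∑ i : Fin k, x i) =
          ∑ S ∈ Finset.univ.powerset.filter (fun S : Finset (Fin k) => S ≠ Finset.univ),
            ((-1 : ℤ) ^ (k - S.card + 1)) • f (∑ j ∈ S, x j) := by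
  simp only [fdeg_le_iff_augIdeal_pow_le_groupRingAnnihilator,
    sum_formula_iff_groupRingAct_differenceProd_apply_zero]
  constructor
  · intro h k hk x
    have hx := Ideal.pow_le_pow_right hk (differenceProd_mem_augIdeal_pow x)
    rw [mem_groupRingAnnihilator.mp (h hx), Pi.zero_apply]
  · intro h
    rw [augIdeal_pow_eq_span, Ideal.span_le]
    rintro _ ⟨x, rfl⟩
    exact groupRingAct_differenceProd_eq_zero x f (h _ (by omega) x) fun a => h _ (by omega) _
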